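/- arXiv:1909.13270 — 4 statements merged into one kernel-verified Lean document; each statement's English description precedes it below -/
import Mathlib

section
/- Let B be an m×m real symmetric matrix with eigenvalues σ_1 ≥ ... ≥ σ_m, and let x_m be a unit eigenvector corresponding to the smallest eigenvalue σ_m. Then for every unit vector x in R^m, ⟨B, x xᵀ − x_m x_mᵀ⟩ ≥ ((σ_{m−1} − σ_m)/2) · ‖x xᵀ − x_m x_mᵀ‖_F², where ⟨·,·⟩ denotes the trace inner product of matrices and ‖·‖_F the Frobenius norm. -/
/-!
Write `c i = ⟨u i, x⟩` for the coordinates of `x` in the orthonormal eigenbasis and `y = u (last)`.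
Then `⟨B, x xᵀ - y yᵀ⟩ = xᵀ B x - σ_last = ∑ (σ i - σ_last) c i ²`, while
`‖x xᵀ - y yᵀ‖_F² = 2 - 2 ⟨x, y⟩² = 2 (1 - c_last²) = 2 ∑_{i ≠ last} c i ²`.
Every term with `i ≠ last` has `σ i - σ_last ≥ σ_{m-1} - σ_last`, which gives the bound.
-/

open Matrix

namespace SpherePoly

section Orthonormal

variable {n : Type*} [Fintype n] [DecidableEq n] {u : n → n → ℝ}

/-- A square orthonormal family is complete: `U Uᵀ = 1` forces `Uᵀ U = 1`. -/
theorem sum_dotProduct_smul_of_orthonormal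
    (hu : ∀ i j, u i ⬝ᵥ u j = if i = j then (1 : ℝ) else 0) (x : n → ℝ) :
    ∑ i, (u i ⬝ᵥ x) • u i = x := by
  have hUUt : of u * (of u)ᵀ = 1 := by
    ext i j
    simpa [mul_apply, one_apply, dotProduct] using hu i j
  have hUtU : (of u)ᵀ * of u = 1 := mul_eq_one_comm.mp hUUt
  calc ∑ i, (u i ⬝ᵥ x) • u i = (of u *ᵥ x) ᵥ* of u := (vecMul_eq_sum _ _).symm
    _ = x := by rw [← mulVec_transpose, mulVec_mulVec, hUtU, one_mulVec]

theorem dotProduct_mulVec_eq_sum_eigenvalues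
    (hu : ∀ i j, u i ⬝ᵥ u j = if i = j then (1 : ℝ) else 0)
    {B : Matrix n n ℝ} {σ : n → ℝ} (heig : ∀ i, B *ᵥ u i = σ i • u i) (x : n → ℝ) :
    x ⬝ᵥ (B *ᵥ x) = ∑ i, σ i * (u i ⬝ᵥ x) ^ 2 := by
  conv_lhs => arg 2; rw [← sum_dotProduct_smul_of_orthonormal hu x]
  simp only [mulVec_sum, mulVec_smul, heig, dotProduct_sum, dotProduct_smul, smul_eq_mul]
  exact Finset.sum_congr rfl fun i _ => by rw [dotProduct_comm]; ring

theorem sum_dotProduct_sq_of_orthonormal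
    (hu : ∀ i j, u i ⬝ᵥ u j = if i = j then (1 : ℝ) else 0) (x : n → ℝ) :
    ∑ i, (u i ⬝ᵥ x) ^ 2 = x ⬝ᵥ x := by
  simpa using (dotProduct_mulVec_eq_sum_eigenvalues hu (B := 1) (σ := 1) (by simp) x).symm

end Orthonormal

section RankOne

variable {n R : Type*} [Fintype n] [CommRing R]

theorem sum_sum_mul_vecMulVec (B : Matrix n n R) (x y : n → R) :
    ∑ i, ∑ j, B i j * vecMulVec x y i j = x ⬝ᵥ (B *ᵥ y) := by
  simp only [vecMulVec_apply, dotProduct, mulVec, Finset.mul_sum]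
  exact Finset.sum_congr rfl fun i _ => Finset.sum_congr rfl fun j _ => by ring

theorem sum_sum_vecMulVec_sub_sq (x y : n → R) :
    ∑ i, ∑ j, (vecMulVec x x - vecMulVec y y) i j ^ 2
      = (x ⬝ᵥ x) ^ 2 - 2 * (x ⬝ᵥ y) ^ 2 + (y ⬝ᵥ y) ^ 2 := by
  have hterm : ∀ i j, (vecMulVec x x - vecMulVec y y) i j ^ 2
      = x i * x i * (x j * x j) - 2 * (x i * y i * (x j * y j)) + y i * y i * (y j * y j) :=
    fun i j => by simp only [Matrix.sub_apply, vecMulVec_apply]; ring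
  simp only [hterm, Finset.sum_add_distrib, Finset.sum_sub_distrib, ← Finset.mul_sum,
    ← Finset.sum_mul, dotProduct]
  ring

end RankOne

theorem gap_mul_one_sub_le_sum_mul_sub {ι : Type*} [Fintype ι] [DecidableEq ι]
    {σ w : ι → ℝ} {g : ℝ} {l : ι} (hw : ∀ i, 0 ≤ w i) (hsum : ∑ i, w i = 1)
    (hgap : ∀ i, i ≠ l → g ≤ σ i) :
    (g - σ l) * (1 - w l) ≤ ∑ i, σ i * w i - σ l := by
  have hsplit : ∑ i, σ i * w i - σ l = ∑ i ∈ Finset.univ.erase l, (σ i - σ l) * w i := by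
    rw [Finset.sum_erase _ (by ring), Finset.sum_congr rfl fun i _ => sub_mul (σ i) (σ l) (w i),
      Finset.sum_sub_distrib, ← Finset.mul_sum, hsum, mul_one]
  have hweight : 1 - w l = ∑ i ∈ Finset.univ.erase l, w i := by
    rw [← hsum, ← Finset.add_sum_erase _ _ (Finset.mem_univ l), add_sub_cancel_left]
  rw [hsplit, hweight, Finset.mul_sum]
  refine Finset.sum_le_sum fun i hi => mul_le_mul_of_nonneg_right ?_ (hw i)
  linarith [hgap i (Finset.ne_of_mem_erase hi)]

theorem le_castSucc_last_of_ne_last {m : ℕ} {i : Fin (m + 2)} (hi : i ≠ Fin.last (m + 1)) :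
    i ≤ Fin.castSucc (Fin.last m) := by
  obtain ⟨j, rfl⟩ := Fin.exists_castSucc_eq.mpr hi
  exact Fin.castSucc_le_castSucc_iff.mpr (Fin.le_last j)

theorem stmt1_general (m : ℕ) (B : Matrix (Fin (m + 2)) (Fin (m + 2)) ℝ)
    (σ : Fin (m + 2) → ℝ) (u : Fin (m + 2) → (Fin (m + 2) → ℝ))
    (hortho : ∀ i j, u i ⬝ᵥ u j = if i = j then (1 : ℝ) else 0)
    (heig : ∀ i, B *ᵥ u i = σ i • u i)
    (hdesc : ∀ i j : Fin (m + 2), i ≤ j → σ j ≤ σ i)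
    (x : Fin (m + 2) → ℝ) (hx : x ⬝ᵥ x = 1) :
    ((σ (Fin.castSucc (Fin.last m)) - σ (Fin.last (m + 1))) / 2) *
        (∑ i, ∑ j,
          ((vecMulVec x x - vecMulVec (u (Fin.last (m + 1))) (u (Fin.last (m + 1)))) i j) ^ 2)
      ≤ ∑ i, ∑ j,
          B i j * (vecMulVec x x - vecMulVec (u (Fin.last (m + 1))) (u (Fin.last (m + 1)))) i j := by
  set l := Fin.last (m + 1)
  have hul : u l ⬝ᵥ u l = 1 := by simpa using hortho l l
  have hfrob : ∑ i, ∑ j, (vecMulVec x x - vecMulVec (u l) (u l)) i j ^ 2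
      = 2 * (1 - (u l ⬝ᵥ x) ^ 2) := by
    rw [sum_sum_vecMulVec_sub_sq, hx, hul, dotProduct_comm]
    ring
  have hpair : ∑ i, ∑ j, B i j * (vecMulVec x x - vecMulVec (u l) (u l)) i j
      = ∑ i, σ i * (u i ⬝ᵥ x) ^ 2 - σ l := by
    simp only [Matrix.sub_apply, mul_sub, Finset.sum_sub_distrib, sum_sum_mul_vecMulVec,
      dotProduct_mulVec_eq_sum_eigenvalues hortho heig, heig l, dotProduct_smul, hul,
      smul_eq_mul, mul_one]
  have hgap := gap_mul_one_sub_le_sum_mul_sub (w := fun i => (u i ⬝ᵥ x) ^ 2)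
    (fun i => sq_nonneg _) (by rw [sum_dotProduct_sq_of_orthonormal hortho, hx])
    (fun i hi => hdesc i _ (le_castSucc_last_of_ne_last hi))
  rw [hfrob, hpair]
  linarith

/-- for a real symmetric matrix `B` with eigenvalues
`σ 0 ≥ σ 1 ≥ ... ≥ σ (m+1)` (realized by an orthonormal eigenbasis `u`), with
`x_m := u (Fin.last (m+1))` a unit eigenvector of the smallest eigenvalue, and for any
unit vector `x`, one has
`⟨B, x xᵀ − x_m x_mᵀ⟩ ≥ ((σ_{m−1} − σ_m)/2) ‖x xᵀ − x_m x_mᵀ‖_F²`. -/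
theorem stmt1 (m : ℕ) (B : Matrix (Fin (m + 2)) (Fin (m + 2)) ℝ) (hB : B.IsSymm)
    (σ : Fin (m + 2) → ℝ) (u : Fin (m + 2) → (Fin (m + 2) → ℝ))
    (hortho : ∀ i j, u i ⬝ᵥ u j = if i = j then (1 : ℝ) else 0)
    (heig : ∀ i, B *ᵥ u i = σ i • u i)
    (hdesc : ∀ i j : Fin (m + 2), i ≤ j → σ j ≤ σ i)
    (x : Fin (m + 2) → ℝ) (hx : x ⬝ᵥ x = 1) :
    ((σ (Fin.castSucc (Fin.last m)) - σ (Fin.last (m + 1))) / 2) *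
        (∑ i, ∑ j,
          ((vecMulVec x x - vecMulVec (u (Fin.last (m + 1))) (u (Fin.last (m + 1)))) i j) ^ 2)
      ≤ ∑ i, ∑ j,
          B i j * (vecMulVec x x - vecMulVec (u (Fin.last (m + 1))) (u (Fin.last (m + 1)))) i j :=
  stmt1_general m B σ u hortho heig hdesc x hx

end SpherePoly
end

section
/- Let d ≥ 2 and let X ∈ S^{n^d} be a symmetric tensor such that its matricization Mat(X) ∈ R^{n^{⌊d/2⌋} × n^{⌈d/2⌉}} has rank one. Then X is a rank-one tensor, i.e., X = λ x^{∘d} for some scalar λ and unit vector x ∈ R^n. Conversely if X is a symmetric rank-one tensor then Mat(X) has rank one. Hence {X ∈ S^{n^d} : rank_CP(X) = 1} = {X ∈ S^{n^d} : rank(Mat(X)) = 1}. -/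
open scoped BigOperators

namespace SpherePoly

def IsSymT {n d : ℕ} (A : (Fin d → Fin n) → ℝ) : Prop :=
  ∀ (π : Equiv.Perm (Fin d)) (i : Fin d → Fin n), A (i ∘ π) = A i

/-- Balanced matricization: reshape a `d`-th order tensor into an
`n^{⌊d/2⌋} × n^{⌈d/2⌉}` matrix (rows indexed by the first `⌊d/2⌋` modes). -/
def matT {n d : ℕ} (X : (Fin d → Fin n) → ℝ) :
    Matrix (Fin (d / 2) → Fin n) (Fin (d - d / 2) → Fin n) ℝ :=
  fun a b => X fun i => Sum.elim a b (finSumFinEquiv.symm (Fin.cast (by omega) i))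

end SpherePoly

/-!
Rank one of `Mat X` says that `X i * X j` does not change when the first `⌊d/2⌋` coordinates
of `i` and `j` are exchanged. By symmetry of `X` the same holds for every set of positions of
that size, and exchanging along two such sets in succession exchanges along their symmetric
difference, which can be any pair of positions. When `i` and `j` agree at one position, a pair
exchange is a single-coordinate exchange, so exchanging the coordinates of `i` one at a time
with those of a base point `e` telescopes to
`X i * X e ^ (d + 1) = X e ^ 2 * ∏ t, X (update e t (i t))`.
A symmetric tensor with a nonzero entry has a nonzero diagonal entry `X (c, …, c)`. For that
base point, symmetry makes every factor equal to `y (i t)` with `y k = X (k, c, …, c)`, so `X`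
is a multiple of `y^{∘d}`.
-/

open Finset Function
open scoped symmDiff

theorem Matrix.eq_zero_of_rank_eq_zero {m n K : Type*} [Fintype n] [DecidableEq n] [Field K]
    (A : Matrix m n K) (h : A.rank = 0) : A = 0 := by
  rw [Matrix.rank, Submodule.finrank_eq_zero, LinearMap.range_eq_bot] at h
  ext a b
  simpa using congrFun (LinearMap.congr_fun h (Pi.single b 1)) a

theorem Matrix.exists_vecMulVec_eq_of_rank_le_one {m n K : Type*} [Fintype n] [DecidableEq n]
    [Field K] (A : Matrix m n K) (h : A.rank ≤ 1) : ∃ u w, Matrix.vecMulVec u w = A := by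
  rw [Matrix.rank] at h
  obtain ⟨⟨u, _⟩, hu⟩ := finrank_le_one_iff.mp h
  choose w hw using fun b => hu ⟨A.mulVecLin (Pi.single b 1), LinearMap.mem_range_self _ _⟩
  refine ⟨u, w, ?_⟩
  ext a b
  simpa [Matrix.vecMulVec, mul_comm] using
    congrArg (fun v : LinearMap.range A.mulVecLin => (v : m → K) a) (hw b)

theorem Equiv.Perm.exists_apply_eq_apply_eq {α : Type*} [DecidableEq α] {a b s t : α}
    (hab : a ≠ b) (hst : s ≠ t) : ∃ π : Equiv.Perm α, π a = s ∧ π b = t := by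
  set σ := Equiv.swap a s
  have hσb : σ b ≠ s := fun h =>
    hab (σ.injective (h.trans (Equiv.swap_apply_left a s).symm)).symm
  exact ⟨σ.trans (Equiv.swap (σ b) t), by simp [σ, Equiv.swap_apply_of_ne_of_ne hσb.symm hst],
    Equiv.swap_apply_left _ _⟩

theorem Sum.elim_comp_symm_inl_inr_comp {ι α β κ : Type*} (e : ι ≃ α ⊕ β) (i : ι → κ) :
    Sum.elim (i ∘ e.symm ∘ Sum.inl) (i ∘ e.symm ∘ Sum.inr) ∘ e = i := by
  change Sum.elim ((i ∘ e.symm) ∘ Sum.inl) ((i ∘ e.symm) ∘ Sum.inr) ∘ e = i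
  rw [Sum.elim_comp_inl_inr]
  ext t
  simp

variable {ι κ R : Type*} [DecidableEq ι]

/-- The 2 × 2 minors of the flattening of `X` along `S | Sᶜ` vanish (`S.piecewise j i` is `i`
with its `S`-coordinates replaced by those of `j`). -/
def FlatteningRankLeOne [Mul R] (S : Finset ι) (X : (ι → κ) → R) : Prop :=
  ∀ i j, X i * X j = X (S.piecewise j i) * X (S.piecewise i j)

namespace FlatteningRankLeOne

theorem of_factorization [Fintype ι] {α β : Type*} [CommSemigroup R] {X : (ι → κ) → R}
    (e : ι ≃ α ⊕ β) (u : (α → κ) → R) (w : (β → κ) → R)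
    (h : ∀ a b, X (Sum.elim a b ∘ e) = u a * w b) :
    FlatteningRankLeOne (univ.filter fun t => (e t).isLeft) X := by
  have hX : ∀ i, X i = u (i ∘ e.symm ∘ Sum.inl) * w (i ∘ e.symm ∘ Sum.inr) := fun i => by
    rw [← h, Sum.elim_comp_symm_inl_inr_comp]
  have hl : ∀ f g : ι → κ, (univ.filter fun t => (e t).isLeft).piecewise f g ∘ e.symm ∘ Sum.inl
      = f ∘ e.symm ∘ Sum.inl := fun f g => by
    funext a; simp [piecewise_eq_of_mem]
  have hr : ∀ f g : ι → κ, (univ.filter fun t => (e t).isLeft).piecewise f g ∘ e.symm ∘ Sum.inr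
      = g ∘ e.symm ∘ Sum.inr := fun f g => by
    funext b; simp [piecewise_eq_of_notMem]
  intro i j
  simp only [hX, hl, hr]
  ac_rfl

variable [Mul R] {S T : Finset ι} {X : (ι → κ) → R}

theorem symmDiff (hS : FlatteningRankLeOne S X) (hT : FlatteningRankLeOne T X) :
    FlatteningRankLeOne (S ∆ T) X := by
  intro i j
  rw [hS i j, hT (S.piecewise j i) (S.piecewise i j)]
  congr 2 <;> funext r <;> by_cases hrS : r ∈ S <;> by_cases hrT : r ∈ T <;>
    simp [Finset.piecewise, Finset.mem_symmDiff, hrS, hrT]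

theorem map_perm (hsym : ∀ (π : Equiv.Perm ι) i, X (i ∘ π) = X i)
    (hS : FlatteningRankLeOne S X) (π : Equiv.Perm ι) :
    FlatteningRankLeOne (S.map π.toEmbedding) X := by
  have key : ∀ f g : ι → κ,
      (S.map π.toEmbedding).piecewise f g ∘ π = S.piecewise (f ∘ π) (g ∘ π) := by
    intro f g; funext t; simp [Finset.piecewise]
  intro i j
  rw [← hsym π i, ← hsym π j, hS, ← key, ← key, hsym, hsym]

theorem pair (hsym : ∀ (π : Equiv.Perm ι) i, X (i ∘ π) = X i) (hS : FlatteningRankLeOne S X)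
    {a b s t : ι} (ha : a ∈ S) (hb : b ∉ S) (hst : s ≠ t) : FlatteningRankLeOne {s, t} X := by
  have hab : a ≠ b := ne_of_mem_of_not_mem ha hb
  have hswap : S ∆ S.map (Equiv.swap a b).toEmbedding = {a, b} := by
    ext r
    by_cases hra : r = a
    · subst hra; simp [Finset.mem_symmDiff, Finset.mem_map_equiv, ha, hb]
    · by_cases hrb : r = b
      · subst hrb; simp [Finset.mem_symmDiff, Finset.mem_map_equiv, ha, hb]
      · simp [Finset.mem_symmDiff, Finset.mem_map_equiv, Equiv.swap_apply_of_ne_of_ne hra hrb,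
          hra, hrb]
  obtain ⟨π, rfl, rfl⟩ := Equiv.Perm.exists_apply_eq_apply_eq hab hst
  have hπ : ({a, b} : Finset ι).map π.toEmbedding = {π a, π b} := by simp
  rw [← hπ, ← hswap]
  exact (hS.symmDiff (hS.map_perm hsym _)).map_perm hsym π

theorem mul_update {s t : ι} (h : FlatteningRankLeOne {s, t} X) {i j : ι → κ} (hs : i s = j s) :
    X i * X j = X (update i t (j t)) * X (update j t (i t)) := by
  have key : ∀ f g : ι → κ, f s = g s → ({s, t} : Finset ι).piecewise g f = update f t (g t) := by
    intro f g hfg; funext r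
    by_cases hrt : r = t
    · subst hrt; simp
    · by_cases hrs : r = s
      · subst hrs; simp [hrt, hfg]
      · simp [hrt, hrs]
  rw [h i j, key i j hs, key j i hs.symm]

end FlatteningRankLeOne

section Telescoping

variable [CommMonoid R] {X : (ι → κ) → R}

theorem mul_pow_card_eq_mul_prod (hpair : ∀ s t, s ≠ t → FlatteningRankLeOne {s, t} X)
    (i e : ι → κ) (S : Finset ι) (hS : ∃ s, s ∉ S) :
    X (S.piecewise i e) * X e ^ #S = X e * ∏ t ∈ S, X (update e t (i t)) := by
  induction S using Finset.induction_on with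
  | empty => simp
  | insert t S ht ih =>
    obtain ⟨s, hs⟩ := hS
    rw [Finset.mem_insert, not_or] at hs
    have hstep := (hpair s t hs.1).mul_update (i := update (S.piecewise i e) t (i t)) (j := e)
      (by rw [update_of_ne hs.1, piecewise_eq_of_notMem _ _ _ hs.2])
    rw [update_idem, update_self,
      update_eq_self_iff.mpr (piecewise_eq_of_notMem _ _ _ ht).symm] at hstep
    rw [piecewise_insert, card_insert_of_notMem ht, prod_insert ht]
    calc X (update (S.piecewise i e) t (i t)) * X e ^ (#S + 1)
        = (X (update (S.piecewise i e) t (i t)) * X e) * X e ^ #S := by rw [pow_succ]; ac_rfl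
      _ = X (update e t (i t)) * (X (S.piecewise i e) * X e ^ #S) := by rw [hstep]; ac_rfl
      _ = _ := by rw [ih ⟨s, hs.2⟩]; ac_rfl

theorem mul_pow_card_add_one_eq [Fintype ι]
    (hpair : ∀ s t, s ≠ t → FlatteningRankLeOne {s, t} X) {S : Finset ι}
    (hS : FlatteningRankLeOne S X) {s₀ s₁ : ι} (hs₀ : s₀ ∈ S) (hs₁ : s₁ ∉ S) (i e : ι → κ) :
    X i * X e ^ (Fintype.card ι + 1) = X e ^ 2 * ∏ t, X (update e t (i t)) := by
  have h₁ := mul_pow_card_eq_mul_prod hpair i e S ⟨s₁, hs₁⟩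
  have h₂ := mul_pow_card_eq_mul_prod hpair i e Sᶜ ⟨s₀, by simpa using hs₀⟩
  have hsplit : X i * X e = X (Sᶜ.piecewise i e) * X (S.piecewise i e) := by
    rw [hS i e, piecewise_compl]
  calc X i * X e ^ (Fintype.card ι + 1)
      = (X i * X e) * X e ^ (#S + #Sᶜ) := by rw [card_add_card_compl, pow_succ]; ac_rfl
    _ = (X (S.piecewise i e) * X e ^ #S) * (X (Sᶜ.piecewise i e) * X e ^ #Sᶜ) := by
        rw [hsplit, pow_add]; ac_rfl
    _ = X e ^ 2 * ((∏ t ∈ S, X (update e t (i t))) * ∏ t ∈ Sᶜ, X (update e t (i t))) := by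
        rw [h₁, h₂, sq]; ac_rfl
    _ = _ := by rw [prod_mul_prod_compl]

end Telescoping

section Symmetric

variable [Fintype ι] {K : Type*} [Field K] {X : (ι → κ) → K}
  (hsym : ∀ (π : Equiv.Perm ι) i, X (i ∘ π) = X i)
  (hprod : ∀ i e, X i * X e ^ (Fintype.card ι + 1) = X e ^ 2 * ∏ t, X (update e t (i t)))
include hsym hprod

theorem apply_const_ne_zero {i : ι → κ} (hi : X i ≠ 0) (t₀ : ι) : X (fun _ => i t₀) ≠ 0 := by
  -- comparing `i` with `i ∘ swap t₀ t` shows that no factor of `hprod _ i` vanishes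
  have hupdate : ∀ t, X (update i t (i t₀)) ≠ 0 := by
    intro t h
    have := hprod (i ∘ Equiv.swap t₀ t) i
    rw [hsym, Finset.prod_eq_zero (mem_univ t) (by simpa using h), mul_zero] at this
    exact mul_ne_zero hi (pow_ne_zero _ hi) this
  intro h
  have := hprod (fun _ => i t₀) i
  rw [h, zero_mul] at this
  exact mul_ne_zero (pow_ne_zero 2 hi) (prod_ne_zero_iff.mpr fun t _ => hupdate t) this.symm

theorem eq_mul_prod_apply_update_const {c : κ} (hc : X (fun _ => c) ≠ 0) (t₀ : ι)
    (i : ι → κ) :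
    X i = X (fun _ => c) ^ 2 / X (fun _ => c) ^ (Fintype.card ι + 1)
      * ∏ t, X (update (fun _ => c) t₀ (i t)) := by
  have hmove : ∀ t k, X (update (fun _ => c) t k) = X (update (fun _ => c) t₀ k) := by
    intro t k
    rw [← hsym (Equiv.swap t₀ t), update_comp_equiv, Equiv.symm_swap, Equiv.swap_apply_right]
    rfl
  have := hprod i (fun _ => c)
  simp only [hmove] at this
  field_simp
  linear_combination this

end Symmetric

theorem exists_eq_prod_of_eq_mul_prod {ι κ R : Type*} [Fintype ι] [DecidableEq ι]
    [CommMonoid R] (j₀ : ι) (lam : R) (x : κ → R) :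
    ∃ v : ι → κ → R, (fun i : ι → κ => lam * ∏ j, x (i j)) = fun i => ∏ j, v j (i j) :=
  ⟨fun j k => (if j = j₀ then lam else 1) * x k, by funext i; rw [prod_mul_distrib]; simp⟩

theorem exists_sum_sq_eq_one_mul_prod {ι κ : Type*} [Fintype ι] [Fintype κ] (y : κ → ℝ)
    (hy : y ≠ 0) (μ : ℝ) :
    ∃ (lam : ℝ) (x : κ → ℝ), ∑ k, x k ^ 2 = 1 ∧
      ∀ i : ι → κ, μ * ∏ t, y (i t) = lam * ∏ t, x (i t) := by
  obtain ⟨k₀, hk₀⟩ := Function.ne_iff.mp hy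
  have hpos : 0 < ∑ k, y k ^ 2 :=
    sum_pos' (fun k _ => sq_nonneg _) ⟨k₀, mem_univ _, sq_pos_of_ne_zero hk₀⟩
  have hr : 0 < √(∑ k, y k ^ 2) := Real.sqrt_pos.mpr hpos
  refine ⟨μ * √(∑ k, y k ^ 2) ^ Fintype.card ι, fun k => y k / √(∑ k, y k ^ 2), ?_, fun i => ?_⟩
  · simp_rw [div_pow, ← sum_div, Real.sq_sqrt hpos.le]
    exact div_self hpos.ne'
  · rw [prod_div_distrib, prod_const, card_univ]
    field_simp

namespace SpherePoly

def matTEquiv (d : ℕ) : Fin d ≃ Fin (d / 2) ⊕ Fin (d - d / 2) :=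
  (finCongr (by omega)).trans finSumFinEquiv.symm

variable {n d : ℕ}

theorem matT_apply (X : (Fin d → Fin n) → ℝ) (a : Fin (d / 2) → Fin n)
    (b : Fin (d - d / 2) → Fin n) : matT X a b = X (Sum.elim a b ∘ matTEquiv d) := rfl

theorem matT_row_col (X : (Fin d → Fin n) → ℝ) (i : Fin d → Fin n) :
    matT X (i ∘ (matTEquiv d).symm ∘ Sum.inl) (i ∘ (matTEquiv d).symm ∘ Sum.inr) = X i := by
  rw [matT_apply, Sum.elim_comp_symm_inl_inr_comp]

theorem matT_injective : Injective (matT : ((Fin d → Fin n) → ℝ) → _) :=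
  fun X Y h => funext fun i => by rw [← matT_row_col X i, ← matT_row_col Y i, h]

theorem ne_zero_of_rank_matT_eq_one {X : (Fin d → Fin n) → ℝ} (hr : (matT X).rank = 1) :
    X ≠ 0 := by
  rintro rfl
  rw [show matT (0 : (Fin d → Fin n) → ℝ) = 0 from rfl, Matrix.rank_zero] at hr
  exact zero_ne_one hr

theorem rank_matT_eq_one_of_eq_prod {X : (Fin d → Fin n) → ℝ} (hX : X ≠ 0)
    (v : Fin d → Fin n → ℝ) (hv : X = fun i => ∏ j, v j (i j)) : (matT X).rank = 1 := by
  have hM : matT X = Matrix.vecMulVec (fun a => ∏ a', v ((matTEquiv d).symm (.inl a')) (a a'))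
      (fun b => ∏ b', v ((matTEquiv d).symm (.inr b')) (b b')) := by
    ext a b
    rw [matT_apply, hv, Matrix.vecMulVec_apply]
    dsimp only
    rw [← (matTEquiv d).symm.prod_comp, Fintype.prod_sum_type]
    simp
  have hle : (matT X).rank ≤ 1 := hM ▸ Matrix.rank_vecMulVec_le _ _
  have hne : (matT X).rank ≠ 0 := fun h =>
    hX (matT_injective ((matT X).eq_zero_of_rank_eq_zero h))
  omega

theorem exists_eq_mul_prod_of_rank_matT_eq_one (hd : 2 ≤ d) {X : (Fin d → Fin n) → ℝ}
    (hX : IsSymT X) (hr : (matT X).rank = 1) :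
    ∃ (lam : ℝ) (x : Fin n → ℝ), (∑ j, x j ^ 2 = 1) ∧ X = fun i => lam * ∏ j, x (i j) := by
  obtain ⟨u, w, huw⟩ := (matT X).exists_vecMulVec_eq_of_rank_le_one hr.le
  have hS := FlatteningRankLeOne.of_factorization (matTEquiv d) u w
    fun a b => (congrFun₂ huw a b).symm
  have hin : (matTEquiv d).symm (.inl ⟨0, by omega⟩) ∈
      univ.filter fun t => (matTEquiv d t).isLeft := by simp
  have hout : (matTEquiv d).symm (.inr ⟨0, by omega⟩) ∉
      univ.filter fun t => (matTEquiv d t).isLeft := by simp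
  have hprod := mul_pow_card_add_one_eq (fun s t hst => hS.pair hX hin hout hst) hS hin hout
  obtain ⟨i, hi⟩ := Function.ne_iff.mp (ne_zero_of_rank_matT_eq_one hr)
  set t₀ : Fin d := ⟨0, by omega⟩
  have hc := apply_const_ne_zero hX hprod hi t₀
  obtain ⟨lam, x, hx, hlam⟩ := exists_sum_sq_eq_one_mul_prod (ι := Fin d)
    (fun k => X (update (fun _ => i t₀) t₀ k)) (Function.ne_iff.mpr ⟨i t₀, by simpa using hc⟩)
    (X (fun _ => i t₀) ^ 2 / X (fun _ => i t₀) ^ (Fintype.card (Fin d) + 1))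
  exact ⟨lam, x, hx, funext fun j =>
    (eq_mul_prod_apply_update_const hX hprod hc t₀ j).trans (hlam j)⟩

/-- equivalence between symmetric rank-1 tensors and rank-1 matricizations:
a symmetric tensor whose matricization has rank one is `λ x^{∘d}` for a unit `x`;
conversely a nonzero symmetric outer product of `d` vectors has rank-one matricization;
hence the two sets coincide. -/
theorem stmt5 {n d : ℕ} (hd : 2 ≤ d) :
    (∀ X : (Fin d → Fin n) → ℝ, IsSymT X → (matT X).rank = 1 →
      ∃ (lam : ℝ) (x : Fin n → ℝ), (∑ j, x j ^ 2 = 1) ∧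
        X = fun i => lam * ∏ j, x (i j))
    ∧ (∀ X : (Fin d → Fin n) → ℝ, IsSymT X → X ≠ 0 →
        (∃ v : Fin d → (Fin n → ℝ), X = fun i => ∏ j, v j (i j)) → (matT X).rank = 1)
    ∧ {X : (Fin d → Fin n) → ℝ | IsSymT X ∧ X ≠ 0 ∧
          ∃ v : Fin d → (Fin n → ℝ), X = fun i => ∏ j, v j (i j)}
        = {X : (Fin d → Fin n) → ℝ | IsSymT X ∧ (matT X).rank = 1} := by
  refine ⟨fun X hX hr => exists_eq_mul_prod_of_rank_matT_eq_one hd hX hr,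
    fun X _ hne ⟨v, hv⟩ => rank_matT_eq_one_of_eq_prod hne v hv, ?_⟩
  ext X
  constructor
  · rintro ⟨hX, hne, v, hv⟩
    exact ⟨hX, rank_matT_eq_one_of_eq_prod hne v hv⟩
  · rintro ⟨hX, hr⟩
    refine ⟨hX, ne_zero_of_rank_matT_eq_one hr, ?_⟩
    obtain ⟨lam, x, -, rfl⟩ := exists_eq_mul_prod_of_rank_matT_eq_one hd hX hr
    exact exists_eq_prod_of_eq_mul_prod ⟨0, by omega⟩ lam x

end SpherePoly
end

section
/- Let d be even, A ∈ S^{n^d} symmetric, τ > 0, and suppose X*, Y*, Λ* satisfy the perturbed KKT system: X* minimizes ⟨−Λ* − τY*, X⟩ over the set C of symmetric rank-one 'matrix-positive' tensors with trace-one matricization, Sym(Λ*) = A, and X* = Y*. Writing X* = x^{∘d} with ‖x‖ = 1, the vector x is an eigenvector of A: A x^{∘(d−1)} = σ x for some real σ, with σ = ⟨A, X*⟩. -/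
open scoped BigOperators
open Matrix

namespace SpherePoly

noncomputable def tinner {n d : ℕ} (A B : (Fin d → Fin n) → ℝ) : ℝ :=
  ∑ i : Fin d → Fin n, A i * B i

noncomputable def symT {n d : ℕ} (A : (Fin d → Fin n) → ℝ) : (Fin d → Fin n) → ℝ :=
  fun i => (∑ π : Equiv.Perm (Fin d), A (i ∘ π)) / (Nat.factorial d : ℝ)

/-- Balanced matricization of an even-order (`d = 2m`) tensor. -/
def mat2 {n m : ℕ} (X : (Fin (2 * m) → Fin n) → ℝ) :
    Matrix (Fin m → Fin n) (Fin m → Fin n) ℝ :=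
  fun a b => X fun i => Sum.elim a b (finSumFinEquiv.symm (Fin.cast (by omega) i))

/-- The set `C` of tensors whose matricization is `z zᵀ` for a unit vector `z`
(symmetric rank-one PSD with trace one). -/
def CSet (n m : ℕ) : Set ((Fin (2 * m) → Fin n) → ℝ) :=
  {X | ∃ z : (Fin m → Fin n) → ℝ, (∑ a, z a ^ 2 = 1) ∧ ∀ a b, mat2 X a b = z a * z b}

/-- The contraction `(A x^{∘(d−1)})_j = Σ_{i, i 0 = j} A_i ∏_{k ≠ 0} x_{i k}`. -/
noncomputable def contract {n m : ℕ} (hm : 0 < m) (A : (Fin (2 * m) → Fin n) → ℝ)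
    (x : Fin n → ℝ) (j : Fin n) : ℝ :=
  ∑ i : Fin (2 * m) → Fin n,
    if i ⟨0, by omega⟩ = j then
      A i * ∏ k ∈ Finset.univ.erase (⟨0, by omega⟩ : Fin (2 * m)), x (i k)
    else 0

/-!
With `Y* = X*`, the first condition says that `z = x^{⊗m}`, the vector with `Mat(X*) = z zᵀ`,
minimizes the quadratic form of `Mat(−Λ* − τX*)` on the unit sphere, so the first variation of
that form vanishes in every direction tangent to the sphere at `z`. Moving `x` to `x + tv` with
`v ⊥ x` moves `z` in such a direction, and the first variation becomes `⟨−Λ* − τX*, T⟩`, where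
`T = d/dt (x + tv)^{⊗d}` is a symmetric tensor. Now `⟨X*, T⟩ = 0` because `v ⊥ x`, symmetry of
`T` replaces `Λ*` by `Sym(Λ*) = A`, and symmetry of `A` gives `⟨A, T⟩ = d ⟨v, A x^{∘(d−1)}⟩`.
So `A x^{∘(d−1)}` is orthogonal to `x^⊥`, hence equal to `σ x` with
`σ = ⟨x, A x^{∘(d−1)}⟩ = ⟨A, X*⟩`.
-/

theorem eq_zero_of_forall_mul_le_sq_mul {b c : ℝ} (h : ∀ t : ℝ, t * b ≤ t ^ 2 * c) : b = 0 := by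
  set C := |c| + 1
  have hC : 0 < C := by positivity
  have key : b / (2 * C) * b ≤ (b / (2 * C)) ^ 2 * C :=
    (h _).trans (mul_le_mul_of_nonneg_left ((le_abs_self c).trans (by linarith)) (sq_nonneg _))
  have hgap : b / (2 * C) * b - (b / (2 * C)) ^ 2 * C = b ^ 2 / (4 * C) := by
    field_simp
    ring
  have hb : b ^ 2 ≤ 0 := by
    have := (div_le_iff₀ (by positivity : (0 : ℝ) < 4 * C)).mp (by linarith : b ^ 2 / (4 * C) ≤ 0)
    rwa [zero_mul] at this
  exact pow_eq_zero_iff two_ne_zero |>.mp (le_antisymm hb (sq_nonneg b))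

section Sphere

variable {ι : Type*} [Fintype ι]

theorem dotProduct_mulVec_eq_sum (M : Matrix ι ι ℝ) (y y' : ι → ℝ) :
    y ⬝ᵥ (M *ᵥ y') = ∑ a, ∑ b, M a b * (y a * y' b) := by
  simp only [dotProduct, mulVec, Finset.mul_sum]
  exact Finset.sum_congr rfl fun a _ => Finset.sum_congr rfl fun b _ => by ring

theorem le_dotProduct_mulVec_of_isMinOn {M : Matrix ι ι ℝ} {z : ι → ℝ}
    (hmin : ∀ y, y ⬝ᵥ y = 1 → z ⬝ᵥ (M *ᵥ z) ≤ y ⬝ᵥ (M *ᵥ y)) (y : ι → ℝ) :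
    z ⬝ᵥ (M *ᵥ z) * (y ⬝ᵥ y) ≤ y ⬝ᵥ (M *ᵥ y) := by
  have hnn : 0 ≤ y ⬝ᵥ y := Finset.sum_nonneg fun i _ => mul_self_nonneg (y i)
  rcases hnn.eq_or_lt with hy | hy
  · rw [← hy, mul_zero, dotProduct_self_eq_zero.mp hy.symm, mulVec_zero, dotProduct_zero]
  set s := Real.sqrt (y ⬝ᵥ y)
  have hs : 0 < s := Real.sqrt_pos.mpr hy
  have hss : s * s = y ⬝ᵥ y := Real.mul_self_sqrt hy.le
  have h := hmin (s⁻¹ • y) (by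
    rw [smul_dotProduct, dotProduct_smul, smul_eq_mul, smul_eq_mul, ← mul_assoc, ← mul_inv,
      hss, inv_mul_cancel₀ hy.ne'])
  rw [mulVec_smul, smul_dotProduct, dotProduct_smul, smul_eq_mul, smul_eq_mul, ← mul_assoc,
    ← mul_inv, hss, inv_mul_eq_div, le_div_iff₀ hy] at h
  exact h

theorem dotProduct_mulVec_add_eq_zero_of_isMinOn {M : Matrix ι ι ℝ} {z w : ι → ℝ}
    (hz : z ⬝ᵥ z = 1) (hmin : ∀ y, y ⬝ᵥ y = 1 → z ⬝ᵥ (M *ᵥ z) ≤ y ⬝ᵥ (M *ᵥ y))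
    (hwz : w ⬝ᵥ z = 0) : w ⬝ᵥ (M *ᵥ z) + z ⬝ᵥ (M *ᵥ w) = 0 := by
  refine eq_zero_of_forall_mul_le_sq_mul (c := w ⬝ᵥ (M *ᵥ w) - z ⬝ᵥ (M *ᵥ z) * (w ⬝ᵥ w))
    fun t => ?_
  have h := le_dotProduct_mulVec_of_isMinOn hmin (z - t • w)
  simp only [sub_dotProduct, dotProduct_sub, mulVec_sub, mulVec_smul, smul_dotProduct,
    dotProduct_smul, smul_eq_mul, dotProduct_comm z w, hz, hwz] at h
  nlinarith [h]

theorem eq_dotProduct_smul_of_forall_dotProduct_eq_zero {x c : ι → ℝ} (hx : x ⬝ᵥ x = 1)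
    (h : ∀ v, v ⬝ᵥ x = 0 → v ⬝ᵥ c = 0) : c = (x ⬝ᵥ c) • x := by
  set r := c - (x ⬝ᵥ c) • x
  have hrx : r ⬝ᵥ x = 0 := by
    simp only [r, sub_dotProduct, smul_dotProduct, hx, smul_eq_mul, mul_one, dotProduct_comm c x,
      sub_self]
  have hrr : r ⬝ᵥ r = 0 := by
    rw [dotProduct_sub r c, dotProduct_smul, h r hrx, dotProduct_comm r x, dotProduct_comm x r,
      hrx, smul_zero, sub_zero]
  exact (sub_eq_zero.mp (dotProduct_self_eq_zero.mp hrr))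

end Sphere

section OuterProduct

open Function

variable {ι κ : Type*} [Fintype κ]

def outerProd (F : κ → ι → ℝ) (i : κ → ι) : ℝ :=
  ∏ k, F k (i k)

def tpow (x : ι → ℝ) : (κ → ι) → ℝ :=
  outerProd fun _ => x

def tpowDeriv [DecidableEq κ] (x v : ι → ℝ) (i : κ → ι) : ℝ :=
  ∑ k, outerProd (update (fun _ => x) k v) i

theorem sum_outerProd_mul_outerProd [Fintype ι] [DecidableEq κ] (F G : κ → ι → ℝ) :
    ∑ i, outerProd F i * outerProd G i = ∏ k, F k ⬝ᵥ G k := by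
  simp only [outerProd, ← Finset.prod_mul_distrib, dotProduct]
  exact (Fintype.prod_sum fun k j => F k j * G k j).symm

theorem outerProd_comp_equiv {κ' : Type*} [Fintype κ'] (F : κ' → ι → ℝ) (e : κ' ≃ κ)
    (i : κ → ι) : outerProd F (i ∘ e) = outerProd (F ∘ e.symm) i := by
  simp only [outerProd, Function.comp_apply, ← e.prod_comp fun k => F (e.symm k) (i k),
    Equiv.symm_apply_apply]

theorem outerProd_sumElim {κ₁ κ₂ : Type*} [Fintype κ₁] [Fintype κ₂]
    (F : κ₁ ⊕ κ₂ → ι → ℝ) (a : κ₁ → ι) (b : κ₂ → ι) :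
    outerProd F (Sum.elim a b) = outerProd (F ∘ Sum.inl) a * outerProd (F ∘ Sum.inr) b :=
  Fintype.prod_sum_type _

theorem tpow_comp_equiv {κ' : Type*} [Fintype κ'] (x : ι → ℝ) (e : κ' ≃ κ)
    (i : κ → ι) : tpow x (i ∘ e) = tpow x i :=
  outerProd_comp_equiv _ e i

theorem tpow_sumElim {κ₁ κ₂ : Type*} [Fintype κ₁] [Fintype κ₂] (x : ι → ℝ)
    (a : κ₁ → ι) (b : κ₂ → ι) : tpow x (Sum.elim a b) = tpow x a * tpow x b :=
  outerProd_sumElim _ a b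

theorem outerProd_update_const [DecidableEq κ] (x v : ι → ℝ) (k : κ) (i : κ → ι) :
    outerProd (update (fun _ => x) k v) i = v (i k) * ∏ l ∈ Finset.univ.erase k, x (i l) := by
  rw [outerProd, ← Finset.mul_prod_erase _ _ (Finset.mem_univ k), update_self]
  congr 1
  exact Finset.prod_congr rfl fun l hl => by rw [update_of_ne (Finset.ne_of_mem_erase hl)]

theorem sum_tpow_mul_tpow [Fintype ι] [DecidableEq κ] (x : ι → ℝ) :
    ∑ i : κ → ι, tpow x i * tpow x i = (x ⬝ᵥ x) ^ Fintype.card κ := by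
  rw [tpow, sum_outerProd_mul_outerProd, Finset.prod_const, Finset.card_univ]

theorem sum_tpowDeriv_mul_tpow [Fintype ι] [DecidableEq κ] {x v : ι → ℝ} (hvx : v ⬝ᵥ x = 0) :
    ∑ i : κ → ι, tpowDeriv x v i * tpow x i = 0 := by
  simp only [tpowDeriv, Finset.sum_mul]
  rw [Finset.sum_comm]
  refine Finset.sum_eq_zero fun k _ => ?_
  rw [tpow, sum_outerProd_mul_outerProd]
  exact Finset.prod_eq_zero (Finset.mem_univ k) (by rw [update_self, hvx])

theorem tpowDeriv_comp_equiv [DecidableEq κ] {κ' : Type*} [Fintype κ'] [DecidableEq κ']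
    (x v : ι → ℝ) (e : κ' ≃ κ) (i : κ → ι) :
    tpowDeriv x v (i ∘ e) = tpowDeriv x v i := by
  simp only [tpowDeriv, outerProd_comp_equiv, update_comp_equiv]
  exact e.sum_comp fun k => outerProd (update (fun _ => x) k v) i

theorem tpowDeriv_sumElim {κ₁ κ₂ : Type*} [Fintype κ₁] [Fintype κ₂] [DecidableEq κ₁]
    [DecidableEq κ₂] (x v : ι → ℝ) (a : κ₁ → ι) (b : κ₂ → ι) :
    tpowDeriv x v (Sum.elim a b) = tpowDeriv x v a * tpow x b + tpow x a * tpowDeriv x v b := by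
  simp only [tpowDeriv, tpow, Fintype.sum_sum_type, outerProd_sumElim, Finset.sum_mul,
    Finset.mul_sum, update_comp_eq_of_injective _ Sum.inl_injective,
    update_comp_eq_of_injective _ Sum.inr_injective,
    update_comp_eq_of_forall_ne _ _ (fun _ => Sum.inr_ne_inl),
    update_comp_eq_of_forall_ne _ _ (fun _ => Sum.inl_ne_inr)]
  rfl

end OuterProduct

section SymmetricTensor

variable {n d : ℕ}

theorem sum_comp_perm (F : (Fin d → Fin n) → ℝ) (π : Equiv.Perm (Fin d)) :
    ∑ i : Fin d → Fin n, F (i ∘ π) = ∑ i, F i :=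
  (Equiv.arrowCongr π.symm (Equiv.refl (Fin n))).sum_comp F

theorem tinner_comp_perm (A B : (Fin d → Fin n) → ℝ) (π : Equiv.Perm (Fin d)) :
    tinner (fun i => A (i ∘ π)) (fun i => B (i ∘ π)) = tinner A B :=
  sum_comp_perm (fun i => A i * B i) π

theorem IsSymT.tinner_comp_perm {A : (Fin d → Fin n) → ℝ} (hA : IsSymT A)
    (G : (Fin d → Fin n) → ℝ) (π : Equiv.Perm (Fin d)) :
    tinner A (fun i => G (i ∘ π)) = tinner A G := by
  conv_lhs => rw [← funext (hA π)]
  exact SpherePoly.tinner_comp_perm A G π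

theorem tinner_symT_of_isSymT (L : (Fin d → Fin n) → ℝ) {T : (Fin d → Fin n) → ℝ}
    (hT : IsSymT T) : tinner (symT L) T = tinner L T := by
  have h : ∀ π : Equiv.Perm (Fin d), tinner (fun i => L (i ∘ π)) T = tinner L T := fun π => by
    conv_lhs => rw [← funext (hT π)]
    exact tinner_comp_perm L T π
  simp only [tinner, symT, div_mul_eq_mul_div, Finset.sum_mul, ← Finset.sum_div] at h ⊢
  rw [Finset.sum_comm, Finset.sum_congr rfl fun π _ => h π, Finset.sum_const, Finset.card_univ,
    Fintype.card_perm, Fintype.card_fin, nsmul_eq_mul, mul_div_cancel_left₀]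
  exact_mod_cast d.factorial_ne_zero

theorem isSymT_tpowDeriv (x v : Fin n → ℝ) : IsSymT (tpowDeriv x v : (Fin d → Fin n) → ℝ) :=
  fun π => tpowDeriv_comp_equiv x v π

theorem IsSymT.tinner_tpowDeriv {A : (Fin d → Fin n) → ℝ} (hA : IsSymT A) (x v : Fin n → ℝ)
    (k : Fin d) :
    tinner A (tpowDeriv x v) = d * tinner A (outerProd (Function.update (fun _ => x) k v)) := by
  have slot : ∀ l : Fin d, tinner A (outerProd (Function.update (fun _ => x) l v)) =
      tinner A (outerProd (Function.update (fun _ => x) k v)) := fun l => by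
    rw [← hA.tinner_comp_perm _ (Equiv.swap k l)]
    simp only [outerProd_comp_equiv, Function.update_comp_equiv, Equiv.symm_symm,
      Equiv.swap_apply_right]
    rfl
  simp only [tinner, tpowDeriv, Finset.mul_sum] at slot ⊢
  rw [Finset.sum_comm, Finset.sum_congr rfl fun l _ => slot l, Finset.sum_const,
    Finset.card_univ, Fintype.card_fin, nsmul_eq_mul, Finset.mul_sum]

theorem dotProduct_contract {m : ℕ} (hm : 0 < m) (A : (Fin (2 * m) → Fin n) → ℝ) (x v : Fin n → ℝ) :
    v ⬝ᵥ contract hm A x =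
      tinner A (outerProd (Function.update (fun _ => x) ⟨0, by omega⟩ v)) := by
  simp only [contract, dotProduct, tinner, outerProd_update_const, Finset.mul_sum, mul_ite,
    mul_zero]
  rw [Finset.sum_comm]
  refine Finset.sum_congr rfl fun i _ => ?_
  rw [Finset.sum_ite_eq, if_pos (Finset.mem_univ _)]
  ring

end SymmetricTensor

section Matricization

variable {n m : ℕ}

def halves (m : ℕ) : Fin (2 * m) ≃ Fin m ⊕ Fin m :=
  (finCongr (two_mul m)).trans finSumFinEquiv.symm

def splitIndex (n m : ℕ) : (Fin (2 * m) → Fin n) ≃ (Fin m → Fin n) × (Fin m → Fin n) :=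
  (Equiv.arrowCongr (halves m) (Equiv.refl _)).trans (Equiv.sumArrowEquivProdArrow _ _ _)

theorem mat2_apply (X : (Fin (2 * m) → Fin n) → ℝ) (a b : Fin m → Fin n) :
    mat2 X a b = X ((splitIndex n m).symm (a, b)) :=
  rfl

theorem splitIndex_symm_apply (a b : Fin m → Fin n) :
    (splitIndex n m).symm (a, b) = Sum.elim a b ∘ halves m :=
  rfl

theorem tinner_eq_sum_mat2 (B Y : (Fin (2 * m) → Fin n) → ℝ) :
    tinner B Y = ∑ a, ∑ b, mat2 B a b * mat2 Y a b := by
  rw [tinner, ← (splitIndex n m).symm.sum_comp, Fintype.sum_prod_type]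
  rfl

theorem mat2_tpow (x : Fin n → ℝ) (a b : Fin m → Fin n) :
    mat2 (tpow x) a b = tpow x a * tpow x b := by
  rw [mat2_apply, splitIndex_symm_apply, tpow_comp_equiv, tpow_sumElim]

theorem mat2_tpowDeriv (x v : Fin n → ℝ) (a b : Fin m → Fin n) :
    mat2 (tpowDeriv x v) a b = tpowDeriv x v a * tpow x b + tpow x a * tpowDeriv x v b := by
  rw [mat2_apply, splitIndex_symm_apply, tpowDeriv_comp_equiv, tpowDeriv_sumElim]

theorem exists_mem_CSet_tinner_eq (B : (Fin (2 * m) → Fin n) → ℝ) {z : (Fin m → Fin n) → ℝ}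
    (hz : z ⬝ᵥ z = 1) : ∃ X ∈ CSet n m, tinner B X = z ⬝ᵥ (mat2 B *ᵥ z) := by
  set X : (Fin (2 * m) → Fin n) → ℝ := fun i => z (splitIndex n m i).1 * z (splitIndex n m i).2
  have hX : ∀ a b, mat2 X a b = z a * z b := fun a b => by simp [X, mat2_apply]
  refine ⟨X, ⟨z, by simpa [dotProduct, sq] using hz, hX⟩, ?_⟩
  simp only [tinner_eq_sum_mat2, hX, dotProduct_mulVec_eq_sum]

end Matricization

theorem tinner_tpowDeriv_eq_zero_of_isMinOn {n m : ℕ} (B : (Fin (2 * m) → Fin n) → ℝ)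
    {x v : Fin n → ℝ} (hx : x ⬝ᵥ x = 1) (hmin : ∀ X ∈ CSet n m, tinner B (tpow x) ≤ tinner B X)
    (hvx : v ⬝ᵥ x = 0) : tinner B (tpowDeriv x v) = 0 := by
  set z : (Fin m → Fin n) → ℝ := tpow x
  have hz : z ⬝ᵥ z = 1 := by
    rw [dotProduct, sum_tpow_mul_tpow, hx, one_pow]
  have hzX : tinner B (tpow x) = z ⬝ᵥ (mat2 B *ᵥ z) := by
    simp only [tinner_eq_sum_mat2, dotProduct_mulVec_eq_sum, mat2_tpow, z]
  have hzmin : ∀ y, y ⬝ᵥ y = 1 → z ⬝ᵥ (mat2 B *ᵥ z) ≤ y ⬝ᵥ (mat2 B *ᵥ y) := fun y hy => by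
    obtain ⟨X, hXC, hX⟩ := exists_mem_CSet_tinner_eq B hy
    exact hzX ▸ hX ▸ hmin X hXC
  have hfirst := dotProduct_mulVec_add_eq_zero_of_isMinOn hz hzmin (sum_tpowDeriv_mul_tpow hvx)
  simp only [← hfirst, tinner_eq_sum_mat2, dotProduct_mulVec_eq_sum, mat2_tpowDeriv, mul_add,
    Finset.sum_add_distrib, z]

theorem stmt6_general {n m : ℕ} (hm : 0 < m) (τ : ℝ)
    (A Xs Ys Λs : (Fin (2 * m) → Fin n) → ℝ) (hA : IsSymT A)
    (hmin : ∀ X ∈ CSet n m,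
      tinner (fun i => -Λs i - τ * Ys i) Xs ≤ tinner (fun i => -Λs i - τ * Ys i) X)
    (hSym : symT Λs = A) (hXY : Xs = Ys)
    (x : Fin n → ℝ) (hx : ∑ j, x j ^ 2 = 1)
    (hXsx : Xs = fun i => ∏ k, x (i k)) :
    ∀ j, contract hm A x j = tinner A Xs * x j := by
  subst hXY
  obtain rfl : Xs = tpow x := hXsx
  have hx1 : x ⬝ᵥ x = 1 := by simpa only [dotProduct, sq] using hx
  have hσ : x ⬝ᵥ contract hm A x = tinner A (tpow x) := by
    rw [dotProduct_contract, Function.update_eq_self]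
    rfl
  have horth : ∀ v, v ⬝ᵥ x = 0 → v ⬝ᵥ contract hm A x = 0 := fun v hvx => by
    have hkkt := tinner_tpowDeriv_eq_zero_of_isMinOn _ hx1 hmin hvx
    have hXsT : tinner (tpow x) (tpowDeriv x v : (Fin (2 * m) → Fin n) → ℝ) = 0 := by
      simpa only [tinner, mul_comm] using sum_tpowDeriv_mul_tpow hvx
    have hΛT : tinner Λs (tpowDeriv x v) = (2 * m : ℕ) * (v ⬝ᵥ contract hm A x) := by
      rw [← tinner_symT_of_isSymT Λs (isSymT_tpowDeriv x v), hSym,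
        hA.tinner_tpowDeriv x v ⟨0, by omega⟩, dotProduct_contract]
    simp only [tinner, sub_mul, neg_mul, Finset.sum_sub_distrib, Finset.sum_neg_distrib,
      mul_assoc, ← Finset.mul_sum] at hkkt hXsT hΛT
    rw [hXsT, mul_zero, sub_zero, neg_eq_zero, hΛT] at hkkt
    have h2m : ((2 * m : ℕ) : ℝ) ≠ 0 := by positivity
    exact (mul_eq_zero.mp hkkt).resolve_left h2m
  intro j
  simpa only [hσ, Pi.smul_apply, smul_eq_mul] using
    congrFun (eq_dotProduct_smul_of_forall_dotProduct_eq_zero hx1 horth) j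

/-- if `{X*, Y*, Λ*}` satisfies the perturbed KKT system and
`X* = x^{∘d}` with `‖x‖ = 1`, then `x` is an eigenvector of `A` with eigenvalue
`σ = ⟨A, X*⟩`. -/
theorem stmt6 {n m : ℕ} (hm : 0 < m) (τ : ℝ) (hτ : 0 < τ)
    (A Xs Ys Λs : (Fin (2 * m) → Fin n) → ℝ) (hA : IsSymT A)
    (hXsC : Xs ∈ CSet n m)
    (hmin : ∀ X ∈ CSet n m,
      tinner (fun i => -Λs i - τ * Ys i) Xs ≤ tinner (fun i => -Λs i - τ * Ys i) X)
    (hSym : symT Λs = A) (hXY : Xs = Ys)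
    (x : Fin n → ℝ) (hx : ∑ j, x j ^ 2 = 1)
    (hXsx : Xs = fun i => ∏ k, x (i k)) :
    ∀ j, contract hm A x j = tinner A Xs * x j :=
  stmt6_general hm τ A Xs Ys Λs hA hmin hSym hXY x hx hXsx

end SpherePoly
end

section
/- Let M be an N×N symmetric matrix with smallest eigenvalue σ_N simple and unit eigenvector z_N, and let τ satisfy 0 < τ < σ_{N−1} − σ_N, where σ_{N−1} is the second smallest eigenvalue. If a unit vector z* satisfies (M + τ z* z*ᵀ) z* = σ' z* where σ' is the smallest eigenvalue of M + τ z* z*ᵀ, then z* is (up to sign) the eigenvector z_N corresponding to the smallest eigenvalue of M. -/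
/-!
Write `c = z*·z_N` and split `z* = c z_N + w` with `w ⊥ z_N`. The perturbed eigen-equation gives
`M z* = (σ' - τ) z*`, so `wᵀ M w = (σ' - τ)(1 - c²)`, while testing the minimality of `σ'` on
`z_N` gives `σ' ≤ σ_N + τ c²`. Hence `σ' - τ ≤ σ_N < σ_{N-1} - τ`, and the spectral gap on
`z_N^⊥` forces `‖w‖² = 1 - c² = 0`, i.e. `z* = ±z_N`.
-/

open Matrix

namespace SpherePoly

variable {n : Type*} [Fintype n]

lemma vecMulVec_self_mulVec (u v : n → ℝ) : vecMulVec u u *ᵥ v = (u ⬝ᵥ v) • u := by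
  rw [vecMulVec_mulVec, op_smul_eq_smul]

lemma sub_smul_dotProduct_eq_zero {u : n → ℝ} (hu : u ⬝ᵥ u = 1) (z : n → ℝ) :
    (z - (z ⬝ᵥ u) • u) ⬝ᵥ u = 0 := by
  rw [sub_dotProduct, smul_dotProduct, hu, smul_eq_mul, mul_one, sub_self]

lemma sub_smul_dotProduct_self {u : n → ℝ} (hu : u ⬝ᵥ u = 1) (z : n → ℝ) :
    (z - (z ⬝ᵥ u) • u) ⬝ᵥ (z - (z ⬝ᵥ u) • u) = z ⬝ᵥ z - (z ⬝ᵥ u) * (z ⬝ᵥ u) := by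
  rw [dotProduct_sub, dotProduct_smul, sub_smul_dotProduct_eq_zero hu, smul_zero, sub_zero,
    sub_dotProduct, smul_dotProduct, dotProduct_comm u z, smul_eq_mul]

lemma eq_or_eq_neg_of_dotProduct_mul_self_eq_one {u z : n → ℝ} (hu : u ⬝ᵥ u = 1)
    (hz : z ⬝ᵥ z = 1) (h : (z ⬝ᵥ u) * (z ⬝ᵥ u) = 1) : z = u ∨ z = -u := by
  have hzero : z - (z ⬝ᵥ u) • u = 0 := by
    rw [← dotProduct_self_eq_zero, sub_smul_dotProduct_self hu, hz, h, sub_self]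
  rw [sub_eq_zero] at hzero
  rcases mul_self_eq_one_iff.mp h with h1 | h1
  · left; rw [hzero, h1, one_smul]
  · right; rw [hzero, h1, neg_one_smul]

lemma sub_smul_dotProduct_mulVec {M : Matrix n n ℝ} {u z : n → ℝ} {ν μ : ℝ}
    (hu : u ⬝ᵥ u = 1) (hMu : M *ᵥ u = ν • u) (hMz : M *ᵥ z = μ • z) :
    (z - (z ⬝ᵥ u) • u) ⬝ᵥ (M *ᵥ (z - (z ⬝ᵥ u) • u)) =
      μ * (z ⬝ᵥ z - (z ⬝ᵥ u) * (z ⬝ᵥ u)) := by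
  have hzu : (z - (z ⬝ᵥ u) • u) ⬝ᵥ z = z ⬝ᵥ z - (z ⬝ᵥ u) * (z ⬝ᵥ u) := by
    rw [sub_dotProduct, smul_dotProduct, dotProduct_comm u z, smul_eq_mul]
  rw [mulVec_sub, mulVec_smul, hMz, hMu, dotProduct_sub, dotProduct_smul, dotProduct_smul,
    dotProduct_smul, sub_smul_dotProduct_eq_zero hu, hzu]
  simp

section RankOneUpdate

variable {M : Matrix n n ℝ} {z : n → ℝ} {τ σ : ℝ}

lemma mulVec_eq_of_rankOne_update (hz : z ⬝ᵥ z = 1)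
    (h : (M + τ • vecMulVec z z) *ᵥ z = σ • z) : M *ᵥ z = (σ - τ) • z := by
  rw [add_mulVec, smul_mulVec, vecMulVec_self_mulVec, hz, one_smul] at h
  rw [sub_smul, ← h, add_sub_cancel_right]

lemma le_of_rankOne_update_rayleigh
    (hmin : ∀ w : n → ℝ, σ * (w ⬝ᵥ w) ≤ w ⬝ᵥ ((M + τ • vecMulVec z z) *ᵥ w))
    {v : n → ℝ} {ν : ℝ} (hv : v ⬝ᵥ v = 1) (hMv : M *ᵥ v = ν • v) :
    σ ≤ ν + τ * ((z ⬝ᵥ v) * (z ⬝ᵥ v)) := by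
  have h := hmin v
  rw [add_mulVec, smul_mulVec, vecMulVec_self_mulVec, hMv, dotProduct_add, dotProduct_smul,
    dotProduct_smul, dotProduct_smul, dotProduct_comm v z, hv] at h
  simp only [smul_eq_mul, mul_one] at h
  linarith

end RankOneUpdate

theorem stmt8_general {N : ℕ} (M : Matrix (Fin N) (Fin N) ℝ)
    (σN σN1 : ℝ) (zN : Fin N → ℝ) (hzN : zN ⬝ᵥ zN = 1)
    (heig : M *ᵥ zN = σN • zN)
    (hsecond : ∀ w : Fin N → ℝ, w ⬝ᵥ zN = 0 → σN1 * (w ⬝ᵥ w) ≤ w ⬝ᵥ (M *ᵥ w))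
    (τ : ℝ) (hτ1 : 0 < τ) (hτ2 : τ < σN1 - σN)
    (zs : Fin N → ℝ) (hzs : zs ⬝ᵥ zs = 1) (σ' : ℝ)
    (heig' : (M + τ • vecMulVec zs zs) *ᵥ zs = σ' • zs)
    (hmin' : ∀ w : Fin N → ℝ, σ' * (w ⬝ᵥ w) ≤ w ⬝ᵥ ((M + τ • vecMulVec zs zs) *ᵥ w)) :
    zs = zN ∨ zs = -zN := by
  set c := zs ⬝ᵥ zN
  set w := zs - c • zN
  have hσ' : σ' ≤ σN + τ * (c * c) := le_of_rankOne_update_rayleigh hmin' hzN heig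
  have hgap : σN1 * (1 - c * c) ≤ (σ' - τ) * (1 - c * c) := by
    have h := hsecond w (sub_smul_dotProduct_eq_zero hzN zs)
    rwa [sub_smul_dotProduct_self hzN,
      sub_smul_dotProduct_mulVec hzN heig (mulVec_eq_of_rankOne_update hzs heig'), hzs] at h
  have hw_nonneg : 0 ≤ 1 - c * c := by
    have h := dotProduct_star_self_nonneg w
    rwa [star_trivial, sub_smul_dotProduct_self hzN, hzs] at h
  have hcc : c * c = 1 := by
    nlinarith [mul_le_mul_of_nonneg_right hσ' hw_nonneg, mul_nonneg hτ1.le hw_nonneg]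
  exact eq_or_eq_neg_of_dotProduct_mul_self_eq_one hzN hzs hcc

/-- let `M` be symmetric with simple smallest eigenvalue `σN` (unit
eigenvector `zN`) and second smallest eigenvalue `σN1` (encoded by the Rayleigh bound on
the orthogonal complement of `zN`), and `0 < τ < σN1 − σN`.  If the unit vector `z*`
satisfies `(M + τ z* z*ᵀ) z* = σ' z*` with `σ'` the smallest eigenvalue of
`M + τ z* z*ᵀ`, then `z* = ±zN`. -/
theorem stmt8 {N : ℕ} (M : Matrix (Fin N) (Fin N) ℝ) (hM : M.IsSymm)
    (σN σN1 : ℝ) (zN : Fin N → ℝ) (hzN : zN ⬝ᵥ zN = 1)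
    (heig : M *ᵥ zN = σN • zN)
    (hsecond : ∀ w : Fin N → ℝ, w ⬝ᵥ zN = 0 → σN1 * (w ⬝ᵥ w) ≤ w ⬝ᵥ (M *ᵥ w))
    (τ : ℝ) (hτ1 : 0 < τ) (hτ2 : τ < σN1 - σN)
    (zs : Fin N → ℝ) (hzs : zs ⬝ᵥ zs = 1) (σ' : ℝ)
    (heig' : (M + τ • vecMulVec zs zs) *ᵥ zs = σ' • zs)
    (hmin' : ∀ w : Fin N → ℝ, σ' * (w ⬝ᵥ w) ≤ w ⬝ᵥ ((M + τ • vecMulVec zs zs) *ᵥ w)) :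
    zs = zN ∨ zs = -zN :=
  stmt8_general M σN σN1 zN hzN heig hsecond τ hτ1 hτ2 zs hzs σ' heig' hmin'

end SpherePoly
end
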